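/- arXiv:0902.1950 — 13 statements merged into one kernel-verified Lean document; each statement's English description precedes it below -/
import Mathlib

section
/- Let U be a type and let r, s : Setoid U be setoids with r ≠ ⊤ and s ≠ ⊤ (i.e., neither is the indiscrete 'blob' partition, so both partitions have nonempty dit sets). Then there exist elements u, v : U such that ¬ r.Rel u v and ¬ s.Rel u v; that is, any two partitions with nonempty dit sets have a distinction in common. -/
/-! If two setoids had no common distinction, every pair would be related by one of them. A pair
`c, d` distinguished by `s` is then related by `r`, and every `x` is `r`-related to `c`: it cannot be
`s`-related to both `c` and `d`, so it is `r`-related to one of them, hence to `c`. Thus `r = ⊤`. -/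

namespace Setoid

variable {α : Type*} {r s : Setoid α}

theorem rel_of_forall_rel_or_rel (h : ∀ x y, r x y ∨ s x y) {c d : α} (hcd : ¬ s c d) (x : α) :
    r x c := by
  have hrcd : r c d := (h c d).resolve_right hcd
  rcases h x c with hxc | hxc
  · exact hxc
  · have hxd : r x d := (h x d).resolve_right fun hxd => hcd (s.trans (s.symm hxc) hxd)
    exact r.trans hxd (r.symm hrcd)

theorem eq_top_of_forall_rel_or_rel (h : ∀ x y, r x y ∨ s x y) (hs : s ≠ ⊤) : r = ⊤ := by
  obtain ⟨c, d, hcd⟩ : ∃ c d, ¬ s c d := by simpa [eq_top_iff] using hs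
  exact eq_top_iff.mpr fun x y =>
    r.trans (rel_of_forall_rel_or_rel h hcd x) (r.symm (rel_of_forall_rel_or_rel h hcd y))

end Setoid

/-- **Common-dits theorem.** Any two partitions (setoids) neither of which is the
indiscrete "blob" partition `⊤` have a distinction in common: there is a pair of
elements distinguished by both. -/
theorem common_dits {U : Type*} (r s : Setoid U) (hr : r ≠ ⊤) (hs : s ≠ ⊤) :
    ∃ u v : U, ¬ r.r u v ∧ ¬ s.r u v := by
  by_contra h
  have h_cover : ∀ u v, r u v ∨ s u v := by
    simpa only [not_exists, not_and_or, not_not] using h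
  exact hr (Setoid.eq_top_of_forall_rel_or_rel h_cover hs)
end

section
/- Let U be a type and let σ : Setoid U be a setoid with σ ≠ ⊤ (σ is not the blob partition). Then the setoid generated by the complement relation fun a b => ¬ σ.Rel a b is ⊤; i.e., for every non-blob partition σ the partition negation satisfies ¬σ = 0. (Graph-theoretically: the complement of a non-universal equivalence relation generates the universal equivalence relation, i.e., the complement of a disconnected graph is connected.) -/
namespace Setoid

variable {U : Type*} {σ : Setoid U}

theorem exists_not_rel_of_ne_top (h : σ ≠ ⊤) (a : U) : ∃ z, ¬ σ.r a z := by
  obtain ⟨x, y, hxy⟩ : ∃ x y, ¬ σ.r x y := by simpa [eq_top_iff] using h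
  by_cases hax : σ.r a x
  · exact ⟨y, fun hay => hxy (σ.trans (σ.symm hax) hay)⟩
  · exact ⟨x, hax⟩

end Setoid

/-- For any non-blob partition `σ`, the partition negation `¬σ` (the setoid generated by
the complement of `σ`'s relation) is the blob partition `⊤`: the complement of a
non-universal equivalence relation generates the universal equivalence relation. -/
theorem neg_of_ne_top_eq_top {U : Type*} (σ : Setoid U) (h : σ ≠ ⊤) :
    Relation.EqvGen.setoid (fun a b => ¬ σ.r a b) = ⊤ := by
  refine Setoid.eq_top_iff.mpr fun a b => ?_
  by_cases hab : σ.r a b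
  · obtain ⟨z, haz⟩ := Setoid.exists_not_rel_of_ne_top h a
    have hbz : ¬ σ.r b z := fun hbz => haz (σ.trans hab hbz)
    exact .trans _ _ _ (.rel _ _ haz) (.symm _ _ (.rel _ _ hbz))
  · exact .rel _ _ hab
end

section
/- Let U be a type and σ, π : Setoid U. For all a, b : U, the relation of partImp σ π holds at (a, b) if and only if a = b, or π.Rel a b holds and the π-class of a is not contained in a single σ-class, i.e., there exist x, y with π.Rel a x, π.Rel a y and ¬ σ.Rel x y. (This is the statement that the dit-set definition of the partition implication σ ⇒ π coincides with the set-of-blocks definition: σ ⇒ π is obtained from π by discretizing exactly those π-blocks that are contained in some σ-block.) -/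
/-!
A `π`-block `B` is either contained in one `σ`-block, and then no generating pair of `σ ⇒ π`
lies in `B` and `B` is discretized, or it meets two `σ`-blocks. In the latter case any two points `a, b ∈ B` are joined
in `σ ⇒ π`: directly if `¬ σ a b`, and otherwise through a point of `B` outside the `σ`-block
of `a` (and hence of `b`).
-/

/-- The partition implication `σ ⇒ π`: the setoid generated by the relation
`fun a b => π.Rel a b ∧ ¬ σ.Rel a b`. -/
def partImp {U : Type*} (σ π : Setoid U) : Setoid U :=
  Relation.EqvGen.setoid (fun a b => π.r a b ∧ ¬ σ.r a b)

namespace Setoid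

variable {U : Type*}

/-- The `π`-block of `a` is not contained in a single `σ`-block. -/
def BlockSplits (σ π : Setoid U) (a : U) : Prop :=
  ∃ x y, π.r a x ∧ π.r a y ∧ ¬ σ.r x y

theorem BlockSplits.of_rel {σ π : Setoid U} {a b : U} (hab : π.r a b)
    (ha : BlockSplits σ π a) : BlockSplits σ π b :=
  let ⟨x, y, hx, hy, hxy⟩ := ha
  ⟨x, y, π.trans' (π.symm' hab) hx, π.trans' (π.symm' hab) hy, hxy⟩

theorem not_rel_or_not_rel_of_not_rel (σ : Setoid U) {x y : U} (hxy : ¬ σ.r x y) (a : U) :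
    ¬ σ.r a x ∨ ¬ σ.r a y := by
  by_contra! h
  exact hxy (σ.trans' (σ.symm' h.1) h.2)

theorem BlockSplits.exists_not_rel {σ π : Setoid U} {a : U} (ha : BlockSplits σ π a) :
    ∃ z, π.r a z ∧ ¬ σ.r a z := by
  obtain ⟨x, y, hx, hy, hxy⟩ := ha
  rcases not_rel_or_not_rel_of_not_rel σ hxy a with hax | hay
  exacts [⟨x, hx, hax⟩, ⟨y, hy, hay⟩]

/-- The set-of-blocks description of `σ ⇒ π`: the blocks of `π` that lie inside a block of `σ`
are discretized, the others are kept. -/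
def blockImp (σ π : Setoid U) : Setoid U where
  r a b := a = b ∨ (π.r a b ∧ BlockSplits σ π a)
  iseqv :=
    { refl := fun _ => Or.inl rfl
      symm := by
        rintro a b (rfl | ⟨hab, ha⟩)
        exacts [Or.inl rfl, Or.inr ⟨π.symm' hab, ha.of_rel hab⟩]
      trans := by
        rintro a b c (rfl | ⟨hab, ha⟩) hbc
        · exact hbc
        rcases hbc with rfl | ⟨hbc, -⟩
        exacts [Or.inr ⟨hab, ha⟩, Or.inr ⟨π.trans' hab hbc, ha⟩] }

theorem partImp_le_blockImp (σ π : Setoid U) : partImp σ π ≤ blockImp σ π :=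
  eqvGen_le fun a b ⟨hπ, hσ⟩ => Or.inr ⟨hπ, a, b, π.refl' a, hπ, hσ⟩

theorem partImp_rel_of_rel_of_not_rel {σ π : Setoid U} {a b : U} (hπ : π.r a b)
    (hσ : ¬ σ.r a b) : (partImp σ π).r a b :=
  Relation.EqvGen.rel a b ⟨hπ, hσ⟩

theorem partImp_rel_of_blockSplits {σ π : Setoid U} {a b : U} (hab : π.r a b)
    (ha : BlockSplits σ π a) : (partImp σ π).r a b := by
  by_cases hσab : σ.r a b
  · obtain ⟨z, haz, hσaz⟩ := ha.exists_not_rel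
    have hσzb : ¬ σ.r z b := fun hzb => hσaz (σ.trans' hσab (σ.symm' hzb))
    exact (partImp σ π).trans' (partImp_rel_of_rel_of_not_rel haz hσaz)
      (partImp_rel_of_rel_of_not_rel (π.trans' (π.symm' haz) hab) hσzb)
  · exact partImp_rel_of_rel_of_not_rel hab hσab

theorem blockImp_le_partImp (σ π : Setoid U) : blockImp σ π ≤ partImp σ π := by
  rintro a b (rfl | ⟨hab, ha⟩)
  exacts [(partImp σ π).refl' a, partImp_rel_of_blockSplits hab ha]

theorem partImp_eq_blockImp (σ π : Setoid U) : partImp σ π = blockImp σ π :=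
  le_antisymm (partImp_le_blockImp σ π) (blockImp_le_partImp σ π)

end Setoid

/-- The dit-set definition of the partition implication `σ ⇒ π` coincides with the
set-of-blocks definition: `(σ ⇒ π).Rel a b` holds iff `a = b`, or `a` and `b` lie in a
common `π`-block that is not contained in a single `σ`-block. -/
theorem partImp_rel_iff {U : Type*} (σ π : Setoid U) (a b : U) :
    (partImp σ π).r a b ↔
      a = b ∨ (π.r a b ∧ ∃ x y, π.r a x ∧ π.r a y ∧ ¬ σ.r x y) := by
  rw [Setoid.partImp_eq_blockImp]
  rfl
end

section
/- Let U be a type and σ, π, τ : Setoid U. Then partImp σ π ≤ τ as setoids (i.e., τ ⪯ σ ⇒ π in the refinement order on partitions) if and only if for all a, b : U, π.Rel a b implies σ.Rel a b ∨ τ.Rel a b (i.e., dit(τ) ∩ dit(σ) ⊆ dit(π)). This is the adjunction-style characterization of the partition implication. -/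
theorem Setoid.eqvGen_le_iff {α : Type*} {r : α → α → Prop} {s : Setoid α} :
    Relation.EqvGen.setoid r ≤ s ↔ ∀ x y, r x y → s x y :=
  Setoid.gi.gc r s

/-- Adjunction-style characterization of the partition implication: `τ ⪯ σ ⇒ π` in the
refinement order (i.e. `partImp σ π ≤ τ` as setoids) iff `dit(τ) ∩ dit(σ) ⊆ dit(π)`,
i.e. every `π`-indistinction is a `σ`-indistinction or a `τ`-indistinction. -/
theorem partImp_le_iff {U : Type*} (σ π τ : Setoid U) :
    partImp σ π ≤ τ ↔ ∀ a b, π.r a b → σ.r a b ∨ τ.r a b := by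
  rw [partImp, Setoid.eqvGen_le_iff]
  refine forall₂_congr fun a b => ?_
  rw [and_imp, ← or_iff_not_imp_left]
end

section
/- Two links suffice for the partition implication: let U be a type, σ, π : Setoid U, and define the relation S a b := π.Rel a b ∧ ¬ σ.Rel a b. Then for all u, u' : U, Relation.EqvGen S u u' holds if and only if u = u', or S u u', or there exists a with S u a and S a u'. -/
/-!
Two points `x, z` of the same `π`-block are joined by a single falsifying link unless they are
also `σ`-related; in that case any link `x → b` gives the two-link chain `x → b → z`, because
`b` is then `σ`-separated from `z` as well. So "equal, or one or two links" only asks that the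
two points share a `π`-block in which the first one has some link, and that relation is already
an equivalence.
-/

def WithinTwoLinks {α : Type*} (r : α → α → Prop) (a b : α) : Prop :=
  a = b ∨ r a b ∨ ∃ c, r a c ∧ r c b

namespace WithinTwoLinks

variable {α : Type*} {r : α → α → Prop} {a b : α}

theorem eqvGen (h : WithinTwoLinks r a b) : Relation.EqvGen r a b := by
  rcases h with rfl | hab | ⟨c, hac, hcb⟩
  · exact .refl a
  · exact .rel a b hab
  · exact .trans a c b (.rel a c hac) (.rel c b hcb)

theorem symm (hr : ∀ {a b}, r a b → r b a) (h : WithinTwoLinks r a b) :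
    WithinTwoLinks r b a := by
  rcases h with rfl | hab | ⟨c, hac, hcb⟩
  · exact .inl rfl
  · exact .inr (.inl (hr hab))
  · exact .inr (.inr ⟨c, hr hcb, hr hac⟩)

theorem eqvGen_iff (h : Equivalence (WithinTwoLinks r)) :
    Relation.EqvGen r a b ↔ WithinTwoLinks r a b :=
  ⟨fun hab => h.eqvGen_iff.mp (Relation.EqvGen.mono (fun _ _ => .inr ∘ .inl) _ _ hab), eqvGen⟩

end WithinTwoLinks

section PartitionImplication

variable {U : Type*} (σ π : Setoid U)

def partImpLink (a b : U) : Prop :=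
  π.r a b ∧ ¬ σ.r a b

variable {σ π} {x y z b : U}

theorem partImpLink.symm (h : partImpLink σ π x y) : partImpLink σ π y x :=
  ⟨π.symm h.1, fun hyx => h.2 (σ.symm hyx)⟩

theorem partImpLink_or_of_rel (hxb : partImpLink σ π x b) (hxz : π.r x z) :
    partImpLink σ π x z ∨ partImpLink σ π b z := by
  by_cases hσ : σ.r x z
  · exact .inr ⟨π.trans (π.symm hxb.1) hxz, fun hbz => hxb.2 (σ.trans hσ (σ.symm hbz))⟩
  · exact .inl ⟨hxz, hσ⟩

theorem withinTwoLinks_partImpLink_iff :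
    WithinTwoLinks (partImpLink σ π) x y ↔
      x = y ∨ π.r x y ∧ ∃ b, partImpLink σ π x b := by
  constructor
  · rintro (rfl | hxy | ⟨c, hxc, hcy⟩)
    · exact .inl rfl
    · exact .inr ⟨hxy.1, y, hxy⟩
    · exact .inr ⟨π.trans hxc.1 hcy.1, c, hxc⟩
  · rintro (rfl | ⟨hxy, b, hxb⟩)
    · exact .inl rfl
    · rcases partImpLink_or_of_rel hxb hxy with hxy' | hby
      · exact .inr (.inl hxy')
      · exact .inr (.inr ⟨b, hxb, hby⟩)

theorem equivalence_withinTwoLinks_partImpLink :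
    Equivalence (WithinTwoLinks (partImpLink σ π)) where
  refl _ := .inl rfl
  symm := WithinTwoLinks.symm partImpLink.symm
  trans {x y z} hxy hyz := by
    rw [withinTwoLinks_partImpLink_iff] at hxy hyz ⊢
    rcases hxy with rfl | ⟨hxy, hlink⟩
    · exact hyz
    rcases hyz with rfl | ⟨hyz, -⟩
    · exact .inr ⟨hxy, hlink⟩
    · exact .inr ⟨π.trans hxy hyz, hlink⟩

end PartitionImplication

/-- **Two links suffice for the partition implication.** With
`S a b := π.r a b ∧ ¬ σ.r a b`, the equivalence closure of `S` relates `u` and `u'`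
iff `u = u'`, or `S u u'`, or there is a two-link `S`-chain from `u` to `u'`. -/
theorem partImp_two_links_suffice {U : Type*} (σ π : Setoid U) (u u' : U) :
    Relation.EqvGen (fun a b => π.r a b ∧ ¬ σ.r a b) u u' ↔
      u = u' ∨ (π.r u u' ∧ ¬ σ.r u u') ∨
        ∃ a, (π.r u a ∧ ¬ σ.r u a) ∧ (π.r a u' ∧ ¬ σ.r a u') := by
  exact WithinTwoLinks.eqvGen_iff (r := partImpLink σ π) equivalence_withinTwoLinks_partImpLink
end

section
/- Four links suffice for the partition nand: let U be a type, σ, τ : Setoid U, and define the relation R a b := ¬ σ.Rel a b ∧ ¬ τ.Rel a b. Then for all u, u' : U, Relation.EqvGen R u u' holds if and only if u = u', or R u u', or there exists a with R u a ∧ R a u', or there exist a, b with R u a ∧ R a b ∧ R b u', or there exist a, b, c with R u a ∧ R a b ∧ R b c ∧ R c u'. -/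
/-!
Write `a — b` when `a` and `b` are distinguished by both `σ` and `τ`. If `x` is linked by neither
to two points `y — z`, it must be `σ`-related to one of them and `τ`-related to the other, since
otherwise transitivity would relate `y` and `z`. Along a chain `x₀ — x₁ — ⋯ — x₅` admitting no
shortcut, `x₀` is therefore related to `x₂, x₃, x₄, x₅` alternately by `σ` and `τ`, and `x₅` to
`x₂, x₁, x₀` alternately as well. Comparing the relation between `x₀` and `x₅` read off from both
ends relates `x₂` and `x₃` or `x₀` and `x₁` by one of the partitions, a contradiction. Hence
every chain of five links can be shortened, and four links suffice.
-/

namespace Relation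

variable {α : Type*} (r : α → α → Prop)

def WithinFourSteps (u u' : α) : Prop :=
  u = u' ∨ r u u' ∨ (∃ a, r u a ∧ r a u') ∨ (∃ a b, r u a ∧ r a b ∧ r b u') ∨
    ∃ a b c, r u a ∧ r a b ∧ r b c ∧ r c u'

variable {r}

theorem WithinFourSteps.reflTransGen {u u' : α} (h : WithinFourSteps r u u') :
    ReflTransGen r u u' := by
  rcases h with rfl | h₁ | ⟨a, h₁, h₂⟩ | ⟨a, b, h₁, h₂, h₃⟩ | ⟨a, b, c, h₁, h₂, h₃, h₄⟩
  · exact .refl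
  · exact .single h₁
  · exact .tail (.single h₁) h₂
  · exact .tail (.tail (.single h₁) h₂) h₃
  · exact .tail (.tail (.tail (.single h₁) h₂) h₃) h₄

theorem WithinFourSteps.tail
    (shortcut : ∀ x₀ x₁ x₂ x₃ x₄ x₅, r x₀ x₁ → r x₁ x₂ → r x₂ x₃ → r x₃ x₄ → r x₄ x₅ →
      WithinFourSteps r x₀ x₅)
    {u v w : α} (h : WithinFourSteps r u v) (hvw : r v w) : WithinFourSteps r u w := by
  rcases h with rfl | h₁ | ⟨a, h₁, h₂⟩ | ⟨a, b, h₁, h₂, h₃⟩ | ⟨a, b, c, h₁, h₂, h₃, h₄⟩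
  · exact .inr (.inl hvw)
  · exact .inr (.inr (.inl ⟨v, h₁, hvw⟩))
  · exact .inr (.inr (.inr (.inl ⟨a, v, h₁, h₂, hvw⟩)))
  · exact .inr (.inr (.inr (.inr ⟨a, b, v, h₁, h₂, h₃, hvw⟩)))
  · exact shortcut u a b c v w h₁ h₂ h₃ h₄ hvw

theorem reflTransGen_iff_withinFourSteps
    (shortcut : ∀ x₀ x₁ x₂ x₃ x₄ x₅, r x₀ x₁ → r x₁ x₂ → r x₂ x₃ → r x₃ x₄ → r x₄ x₅ →
      WithinFourSteps r x₀ x₅)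
    {u u' : α} : ReflTransGen r u u' ↔ WithinFourSteps r u u' := by
  refine ⟨fun h => ?_, WithinFourSteps.reflTransGen⟩
  induction h with
  | refl => exact .inl rfl
  | tail _ hvw ih => exact ih.tail shortcut hvw

end Relation

namespace Setoid

variable {U : Type*}

def nandRel (σ τ : Setoid U) (a b : U) : Prop := ¬ σ a b ∧ ¬ τ a b

instance (σ τ : Setoid U) : Std.Symm (nandRel σ τ) where
  symm _ _ h := ⟨fun hσ => h.1 (σ.symm' hσ), fun hτ => h.2 (τ.symm' hτ)⟩

theorem not_nandRel_iff {σ τ : Setoid U} {a b : U} : ¬ nandRel σ τ a b ↔ σ a b ∨ τ a b := by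
  simp only [nandRel, not_and_or, not_not]

theorem rel_of_rel_of_not_rel {σ τ : Setoid U} {x y z : U} (hyz : ¬ σ y z) (hxy : σ x y)
    (hxz : σ x z ∨ τ x z) : τ x z :=
  hxz.resolve_left fun h => hyz (σ.trans' (σ.symm' hxy) h)

theorem false_of_nandRel_chain_of_rel {σ τ : Setoid U} {x₀ x₁ x₂ x₃ x₄ x₅ : U}
    (h₀₁ : nandRel σ τ x₀ x₁) (h₁₂ : nandRel σ τ x₁ x₂) (h₂₃ : nandRel σ τ x₂ x₃)
    (h₃₄ : nandRel σ τ x₃ x₄) (h₄₅ : nandRel σ τ x₄ x₅) (hσ₀₂ : σ x₀ x₂)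
    (e₀₃ : σ x₀ x₃ ∨ τ x₀ x₃) (e₀₄ : σ x₀ x₄ ∨ τ x₀ x₄) (e₀₅ : σ x₀ x₅ ∨ τ x₀ x₅)
    (e₅₁ : σ x₅ x₁ ∨ τ x₅ x₁) (e₅₂ : σ x₅ x₂ ∨ τ x₅ x₂) : False := by
  have hτ₀₃ : τ x₀ x₃ := rel_of_rel_of_not_rel h₂₃.1 hσ₀₂ e₀₃
  have hσ₀₄ : σ x₀ x₄ := rel_of_rel_of_not_rel h₃₄.2 hτ₀₃ e₀₄.symm
  have hτ₀₅ : τ x₀ x₅ := rel_of_rel_of_not_rel h₄₅.1 hσ₀₄ e₀₅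
  rcases e₅₂ with hσ₅₂ | hτ₅₂
  · have hτ₅₁ : τ x₅ x₁ := rel_of_rel_of_not_rel (fun h => h₁₂.1 (σ.symm' h)) hσ₅₂ e₅₁
    exact h₀₁.2 (τ.trans' hτ₀₅ hτ₅₁)
  · exact h₂₃.2 (τ.trans' (τ.symm' hτ₅₂) (τ.trans' (τ.symm' hτ₀₅) hτ₀₃))

theorem nandRel_shortcut (σ τ : Setoid U) (x₀ x₁ x₂ x₃ x₄ x₅ : U)
    (h₀₁ : nandRel σ τ x₀ x₁) (h₁₂ : nandRel σ τ x₁ x₂) (h₂₃ : nandRel σ τ x₂ x₃)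
    (h₃₄ : nandRel σ τ x₃ x₄) (h₄₅ : nandRel σ τ x₄ x₅) :
    Relation.WithinFourSteps (nandRel σ τ) x₀ x₅ := by
  by_cases e₀₂ : nandRel σ τ x₀ x₂
  · exact .inr (.inr (.inr (.inr ⟨x₂, x₃, x₄, e₀₂, h₂₃, h₃₄, h₄₅⟩)))
  by_cases e₀₃ : nandRel σ τ x₀ x₃
  · exact .inr (.inr (.inr (.inl ⟨x₃, x₄, e₀₃, h₃₄, h₄₅⟩)))
  by_cases e₀₄ : nandRel σ τ x₀ x₄
  · exact .inr (.inr (.inl ⟨x₄, e₀₄, h₄₅⟩))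
  by_cases e₀₅ : nandRel σ τ x₀ x₅
  · exact .inr (.inl e₀₅)
  by_cases e₅₁ : nandRel σ τ x₅ x₁
  · exact .inr (.inr (.inl ⟨x₁, h₀₁, _root_.symm e₅₁⟩))
  by_cases e₅₂ : nandRel σ τ x₅ x₂
  · exact .inr (.inr (.inr (.inl ⟨x₁, x₂, h₀₁, h₁₂, _root_.symm e₅₂⟩)))
  simp only [not_nandRel_iff] at e₀₂ e₀₃ e₀₄ e₀₅ e₅₁ e₅₂
  exfalso
  rcases e₀₂ with hσ₀₂ | hτ₀₂
  · exact false_of_nandRel_chain_of_rel h₀₁ h₁₂ h₂₃ h₃₄ h₄₅ hσ₀₂ e₀₃ e₀₄ e₀₅ e₅₁ e₅₂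
  · exact false_of_nandRel_chain_of_rel (σ := τ) (τ := σ) h₀₁.symm h₁₂.symm h₂₃.symm
      h₃₄.symm h₄₅.symm hτ₀₂ e₀₃.symm e₀₄.symm e₀₅.symm e₅₁.symm e₅₂.symm

end Setoid

/-- **Four links suffice for the partition nand.** With
`R a b := ¬ σ.Rel a b ∧ ¬ τ.Rel a b`, the equivalence closure of `R` relates `u` and `u'`
iff they are connected by an `R`-chain of at most four links (or are equal). -/
theorem nand_four_links_suffice {U : Type*} (σ τ : Setoid U) (u u' : U) :
    Relation.EqvGen (fun a b => ¬ σ.r a b ∧ ¬ τ.r a b) u u' ↔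
      u = u' ∨
      (¬ σ.r u u' ∧ ¬ τ.r u u') ∨
      (∃ a, (¬ σ.r u a ∧ ¬ τ.r u a) ∧ (¬ σ.r a u' ∧ ¬ τ.r a u')) ∨
      (∃ a b, (¬ σ.r u a ∧ ¬ τ.r u a) ∧ (¬ σ.r a b ∧ ¬ τ.r a b) ∧
        (¬ σ.r b u' ∧ ¬ τ.r b u')) ∨
      (∃ a b c, (¬ σ.r u a ∧ ¬ τ.r u a) ∧ (¬ σ.r a b ∧ ¬ τ.r a b) ∧
        (¬ σ.r b c ∧ ¬ τ.r b c) ∧ (¬ σ.r c u' ∧ ¬ τ.r c u')) := by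
  change Relation.EqvGen (Setoid.nandRel σ τ) u u' ↔
    Relation.WithinFourSteps (Setoid.nandRel σ τ) u u'
  rw [Relation.EqvGen.eqvGen_eq_reflTransGen]
  exact Relation.reflTransGen_iff_withinFourSteps (Setoid.nandRel_shortcut σ τ)
end

section
/- Let U be a type and φ, φ' : Setoid U. Let neg ψ denote the setoid generated by fun a b => ¬ ψ.Rel a b, and nand φ φ' the setoid generated by fun a b => ¬ φ.Rel a b ∧ ¬ φ'.Rel a b. Then neg φ ⊓ neg φ' = ⊥ (as setoids) if and only if nand φ φ' = ⊥. (Partition reading: φ and φ' are orthogonal, ¬φ ∨ ¬φ' = 1, if and only if φ | φ' = 1.) -/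
/-!
The nand `φ | φ'` is generated by a relation contained in the generators of both `¬φ` and `¬φ'`,
so it lies below `¬φ ∨ ¬φ'`; this gives one direction. Conversely, `φ | φ' = 1` says that every
pair of points is related by `φ` or by `φ'`. If two equivalence relations together relate all
pairs, one of them already does: were `c, d` unrelated by `φ'`, then every point is `φ`-related
to `c`. So `φ` or `φ'` is the blob, whose negation is the discrete partition.
-/

/-- The plain partition negation `¬ψ`: the setoid generated by the complement of `ψ`'s
relation. -/
def pneg {U : Type*} (ψ : Setoid U) : Setoid U :=
  Relation.EqvGen.setoid (fun a b => ¬ ψ.r a b)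

/-- The partition nand `σ | τ`: the setoid generated by
`fun a b => ¬ σ.r a b ∧ ¬ τ.r a b`. -/
def pnand {U : Type*} (σ τ : Setoid U) : Setoid U :=
  Relation.EqvGen.setoid (fun a b => ¬ σ.r a b ∧ ¬ τ.r a b)

namespace Setoid

variable {α : Type*}

theorem eqvGen_eq_bot_iff {r : α → α → Prop} :
    Relation.EqvGen.setoid r = ⊥ ↔ ∀ x y, r x y → x = y :=
  le_bot_iff.symm.trans (gi.gc r ⊥)

theorem eq_top_or_eq_top_of_forall_rel_or {σ τ : Setoid α} (h : ∀ x y, σ x y ∨ τ x y) :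
    σ = ⊤ ∨ τ = ⊤ := by
  rw [or_iff_not_imp_right, eq_top_iff, eq_top_iff]
  intro hτ
  push Not at hτ
  obtain ⟨c, d, hcd⟩ := hτ
  have hσcd : σ c d := (h c d).resolve_right hcd
  have hσc : ∀ a, σ a c := by
    intro a
    rcases h a c with hac | hac
    · exact hac
    rcases h a d with had | had
    · exact σ.trans' had (σ.symm' hσcd)
    · exact absurd (τ.trans' (τ.symm' hac) had) hcd
  exact fun a b => σ.trans' (hσc a) (σ.symm' (hσc b))

end Setoid

section PartitionLogic

variable {U : Type*}

theorem pnand_le_inf_pneg (σ τ : Setoid U) : pnand σ τ ≤ pneg σ ⊓ pneg τ :=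
  le_inf (Setoid.eqvGen_mono fun _ _ h => h.1) (Setoid.eqvGen_mono fun _ _ h => h.2)

theorem pneg_top : pneg (⊤ : Setoid U) = ⊥ :=
  Setoid.eqvGen_eq_bot_iff.2 fun _ _ h => (h trivial).elim

theorem pnand_eq_bot_iff {σ τ : Setoid U} : pnand σ τ = ⊥ ↔ ∀ x y, σ x y ∨ τ x y := by
  rw [pnand, Setoid.eqvGen_eq_bot_iff]
  refine ⟨fun h x y => ?_, fun h x y hxy => ((h x y).elim hxy.1 hxy.2).elim⟩
  by_contra hxy
  push Not at hxy
  exact hxy.1 (h x y hxy ▸ σ.refl' x)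

end PartitionLogic

/-- `φ` and `φ'` are orthogonal (`¬φ ∨ ¬φ' = 1`, i.e. `pneg φ ⊓ pneg φ' = ⊥` as setoids)
iff their nand is `1` (i.e. `pnand φ φ' = ⊥` as setoids). -/
theorem orthogonal_iff_nand_eq_bot {U : Type*} (φ φ' : Setoid U) :
    pneg φ ⊓ pneg φ' = ⊥ ↔ pnand φ φ' = ⊥ := by
  refine ⟨fun h => le_bot_iff.mp (h ▸ pnand_le_inf_pneg φ φ'), fun h => ?_⟩
  rcases Setoid.eq_top_or_eq_top_of_forall_rel_or (pnand_eq_bot_iff.mp h) with hφ | hφ'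
  · rw [hφ, pneg_top, bot_inf_eq]
  · rw [hφ', pneg_top, inf_bot_eq]
end

section
/- Let U be a type and σ, τ : Setoid U. Writing neg ψ for the setoid generated by fun a b => ¬ ψ.Rel a b, and nand σ τ for the setoid generated by fun a b => ¬ σ.Rel a b ∧ ¬ τ.Rel a b, the following chain of setoid inequalities holds: neg (σ ⊔ τ) ≤ nand σ τ ≤ neg σ ⊓ neg τ. (Partition reading, in the refinement order: ¬σ ∨ ¬τ ⪯ σ | τ ⪯ ¬(σ ∧ τ); in particular the 'strong' De Morgan law ¬σ ∨ ¬τ = ¬(σ ∧ τ) is replaced by these one-directional refinements.) -/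
section

variable {U : Type*} (σ τ : Setoid U)

theorem pneg_sup_le_pnand : pneg (σ ⊔ τ) ≤ pnand σ τ :=
  Setoid.eqvGen_mono fun _ _ h =>
    ⟨fun hσ => h (le_sup_left (a := σ) hσ), fun hτ => h (le_sup_right (b := τ) hτ)⟩

theorem pnand_le_pneg_left : pnand σ τ ≤ pneg σ :=
  Setoid.eqvGen_mono fun _ _ h => h.1

theorem pnand_le_pneg_right : pnand σ τ ≤ pneg τ :=
  Setoid.eqvGen_mono fun _ _ h => h.2

end

/-- In the refinement order: `¬σ ∨ ¬τ ⪯ σ | τ ⪯ ¬(σ ∧ τ)`; in setoid terms,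
`pneg (σ ⊔ τ) ≤ pnand σ τ ≤ pneg σ ⊓ pneg τ`. Only these one-directional refinements
of the "strong" De Morgan law hold in partition logic. -/
theorem pneg_sup_le_pnand_le_inf_pneg {U : Type*} (σ τ : Setoid U) :
    pneg (σ ⊔ τ) ≤ pnand σ τ ∧ pnand σ τ ≤ pneg σ ⊓ pneg τ :=
  ⟨pneg_sup_le_pnand σ τ, le_inf (pnand_le_pneg_left σ τ) (pnand_le_pneg_right σ τ)⟩
end

section
/- CNF decomposition identity: let U be a type and φ, σ, τ, π : Setoid U with φ ≤ π as setoids (i.e., π ⪯ φ in the refinement order). Writing N x := partImp x π and N² x := N (N x), the following setoid identity holds: φ = (N² σ ⊓ N² τ ⊓ φ) ⊔ (N² σ ⊓ N τ ⊓ φ) ⊔ (N σ ⊓ N² τ ⊓ φ) ⊔ (N σ ⊓ N τ ⊓ φ). (Partition reading: φ = (¬^π¬^π σ ∨ ¬^π¬^π τ ∨ φ) ∧ (¬^π¬^π σ ∨ ¬^π τ ∨ φ) ∧ (¬^π σ ∨ ¬^π¬^π τ ∨ φ) ∧ (¬^π σ ∨ ¬^π τ ∨ φ).) -/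
section
variable {U : Type*} {σ π : Setoid U} {a b : U}

lemma partImp_rel_of_not_rel (h : π a b) (hn : ¬ σ a b) : partImp σ π a b :=
  Relation.EqvGen.rel a b ⟨h, hn⟩

lemma partImp_rel_or_partImp_partImp_rel (h : π a b) :
    partImp σ π a b ∨ partImp (partImp σ π) π a b :=
  or_iff_not_imp_left.2 (partImp_rel_of_not_rel h)

end

/-- **CNF decomposition identity**: for `φ` in the interval `[π, 1]` (i.e. `φ ≤ π` as
setoids), writing `N x := partImp x π` (the `π`-negation `¬^π x`),
`φ = (¬^π¬^π σ ∨ ¬^π¬^π τ ∨ φ) ∧ (¬^π¬^π σ ∨ ¬^π τ ∨ φ) ∧ (¬^π σ ∨ ¬^π¬^π τ ∨ φ) ∧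
(¬^π σ ∨ ¬^π τ ∨ φ)`, stated in setoid terms. -/
theorem cnf_decomposition {U : Type*} (φ σ τ π : Setoid U) (hφ : φ ≤ π) :
    φ = (partImp (partImp σ π) π ⊓ partImp (partImp τ π) π ⊓ φ) ⊔
        (partImp (partImp σ π) π ⊓ partImp τ π ⊓ φ) ⊔
        (partImp σ π ⊓ partImp (partImp τ π) π ⊓ φ) ⊔
        (partImp σ π ⊓ partImp τ π ⊓ φ) := by
  refine le_antisymm (fun a b hab => ?_) <|
    sup_le (sup_le (sup_le inf_le_right inf_le_right) inf_le_right) inf_le_right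
  rcases partImp_rel_or_partImp_partImp_rel (σ := σ) (hφ hab) with hσ | hσ <;>
    rcases partImp_rel_or_partImp_partImp_rel (σ := τ) (hφ hab) with hτ | hτ
  · exact le_sup_right (α := Setoid U) ⟨⟨hσ, hτ⟩, hab⟩
  · exact le_sup_of_le_left (α := Setoid U) le_sup_right ⟨⟨hσ, hτ⟩, hab⟩
  · exact le_sup_of_le_left (α := Setoid U) (le_sup_of_le_left le_sup_right)
      ⟨⟨hσ, hτ⟩, hab⟩
  · exact le_sup_of_le_left (α := Setoid U) (le_sup_of_le_left le_sup_left)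
      ⟨⟨hσ, hτ⟩, hab⟩
end

section
/- Lawvere's boundary + core law for partitions: let U be a type and σ, π : Setoid U. Then (σ ⊓ partImp σ π) ⊔ partImp (partImp σ π) π = σ ⊓ π as setoids. (Partition reading: ∂^π σ ∧ ¬^π¬^π σ = σ ∨ π, where the π-coboundary is ∂^π σ := σ ∨ ¬^π σ and the core is the double π-negation ¬^π¬^π σ.) -/
/-
A `π`-related pair is either `σ`-related or a generator of `σ ⇒ π`. Applied with `σ ⇒ π` in
place of `σ`, this says that the generators of the core `¬^π¬^π σ` are `σ`-related, so the core
lies below `σ ∨ π`; and it sorts every pair related by `σ ∨ π` into one related by `∂^π σ` or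
by `¬^π¬^π σ`.
-/

section PartImp

variable {U : Type*}

theorem partImp_rel_of_rel_of_not_rel {σ π : Setoid U} {a b : U} (hπ : π a b) (hσ : ¬ σ a b) :
    partImp σ π a b :=
  Relation.EqvGen.rel a b ⟨hπ, hσ⟩

theorem rel_or_partImp_rel (σ : Setoid U) {π : Setoid U} {a b : U} (hπ : π a b) :
    σ a b ∨ partImp σ π a b :=
  or_iff_not_imp_left.2 (partImp_rel_of_rel_of_not_rel hπ)

theorem partImp_le (σ π : Setoid U) : partImp σ π ≤ π :=
  Setoid.eqvGen_le fun _ _ h => h.1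

theorem partImp_partImp_le (σ π : Setoid U) : partImp (partImp σ π) π ≤ σ :=
  Setoid.eqvGen_le fun _ _ h => (rel_or_partImp_rel σ h.1).resolve_right h.2

end PartImp

/-- **Lawvere's boundary + core law for partitions**:
`∂^π σ ∧ ¬^π¬^π σ = σ ∨ π`, where `∂^π σ = σ ∨ ¬^π σ` is the `π`-coboundary and
`¬^π¬^π σ` the double `π`-negation, stated in setoid terms. -/
theorem lawvere_boundary_core {U : Type*} (σ π : Setoid U) :
    (σ ⊓ partImp σ π) ⊔ partImp (partImp σ π) π = σ ⊓ π := by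
  refine le_antisymm (sup_le (inf_le_inf_left σ (partImp_le σ π))
    (le_inf (partImp_partImp_le σ π) (partImp_le _ π))) ?_
  rintro a b ⟨hσ, hπ⟩
  rcases rel_or_partImp_rel (partImp σ π) hπ with hImp | hCore
  · exact le_sup_left (a := σ ⊓ partImp σ π) ⟨hσ, hImp⟩
  · exact le_sup_right (b := partImp (partImp σ π) π) hCore
end

section
/- co-Leibniz rule for partitions: let U be a type and σ, τ, π : Setoid U. Then ((σ ⊓ τ) ⊓ partImp (σ ⊓ τ) π) = ((σ ⊓ partImp σ π) ⊓ τ) ⊔ (σ ⊓ (τ ⊓ partImp τ π)) as setoids. (Partition reading: ∂^π(σ ∨ τ) = (∂^π σ ∨ τ) ∧ (σ ∨ ∂^π τ), where ∂^π σ := σ ∨ ¬^π σ is the π-coboundary.) -/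
/-!
On a block `B` of `π`, the generating relation of `partImp σ π` is the complement of `σ`
restricted to `B`, i.e. a complete multipartite graph on the `σ`-classes meeting `B`. It is
connected as soon as `B` meets two `σ`-classes and empty otherwise, so `partImp σ π` keeps the
`π`-blocks not contained in a `σ`-block and discretizes the others. Since `B` lies inside no
`σ ⊓ τ`-block exactly when it lies inside no `σ`-block or inside no `τ`-block, every pair related
by the left-hand side is already related by one of the two terms of the join.
-/

namespace partImp

open Relation

variable {U : Type*} {σ σ' π : Setoid U}

theorem rel_iff {a b : U} :
    partImp σ π a b ↔ a = b ∨ π a b ∧ ∃ c, π a c ∧ ¬ σ a c := by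
  constructor
  · intro h
    induction h with
    | rel x y hxy => exact .inr ⟨hxy.1, y, hxy⟩
    | refl => exact .inl rfl
    | symm x y _ ih =>
      rcases ih with rfl | ⟨hxy, c, hxc, hσxc⟩
      · exact .inl rfl
      refine .inr ⟨π.symm hxy, ?_⟩
      by_cases hσyx : σ y x
      · exact ⟨c, π.trans (π.symm hxy) hxc, fun hσyc => hσxc (σ.trans (σ.symm hσyx) hσyc)⟩
      · exact ⟨x, π.symm hxy, hσyx⟩
    | trans x y z _ _ ihxy ihyz =>
      rcases ihxy with rfl | ⟨hxy, hsplit⟩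
      · exact ihyz
      rcases ihyz with rfl | ⟨hyz, -⟩
      · exact .inr ⟨hxy, hsplit⟩
      · exact .inr ⟨π.trans hxy hyz, hsplit⟩
  · rintro (rfl | ⟨hab, c, hac, hσac⟩)
    · exact EqvGen.refl a
    by_cases hσab : σ a b
    · -- `c` lies in a different `σ`-class from both `a` and `b`, so `a — c — b` is a path
      have hσcb : ¬ σ c b := fun hσcb => hσac (σ.trans hσab (σ.symm hσcb))
      exact EqvGen.trans _ c _ (EqvGen.rel _ _ ⟨hac, hσac⟩)
        (EqvGen.rel _ _ ⟨π.trans (π.symm hac) hab, hσcb⟩)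
    · exact EqvGen.rel _ _ ⟨hab, hσab⟩

theorem antitone_left (h : σ ≤ σ') : partImp σ' π ≤ partImp σ π :=
  EqvGen.mono fun _ _ hxy => ⟨hxy.1, fun hσ => hxy.2 (h hσ)⟩

end partImp

/-- **co-Leibniz rule for partitions**:
`∂^π (σ ∨ τ) = (∂^π σ ∨ τ) ∧ (σ ∨ ∂^π τ)`, where `∂^π σ = σ ∨ ¬^π σ` is the
`π`-coboundary, stated in setoid terms. -/
theorem co_leibniz {U : Type*} (σ τ π : Setoid U) :
    ((σ ⊓ τ) ⊓ partImp (σ ⊓ τ) π) =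
      ((σ ⊓ partImp σ π) ⊓ τ) ⊔ (σ ⊓ (τ ⊓ partImp τ π)) := by
  apply le_antisymm
  · rw [Setoid.le_def]
    rintro a b ⟨⟨hσ, hτ⟩, himp⟩
    rcases partImp.rel_iff.1 himp with rfl | ⟨hπ, c, hπc, hστc⟩
    · exact Setoid.refl' _ a
    by_cases hσc : σ a c
    · have himpτ : partImp τ π a b :=
        partImp.rel_iff.2 (.inr ⟨hπ, c, hπc, fun hτc => hστc ⟨hσc, hτc⟩⟩)
      exact Setoid.le_def.1 le_sup_right ⟨hσ, hτ, himpτ⟩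
    · have himpσ : partImp σ π a b := partImp.rel_iff.2 (.inr ⟨hπ, c, hπc, hσc⟩)
      exact Setoid.le_def.1 le_sup_left ⟨⟨hσ, himpσ⟩, hτ⟩
  · exact sup_le
      (le_inf (inf_le_inf_right τ inf_le_left)
        (inf_le_left.trans (inf_le_right.trans (partImp.antitone_left inf_le_left))))
      (le_inf (inf_le_inf_left σ inf_le_left)
        (inf_le_right.trans (inf_le_right.trans (partImp.antitone_left inf_le_right))))
end

section
/- Weak De Morgan law for π-negation: let U be a type and σ, τ, π : Setoid U. Then partImp (σ ⊓ τ) π = partImp σ π ⊔ partImp τ π as setoids. (Partition reading: ¬^π(σ ∨ τ) = ¬^π σ ∧ ¬^π τ.) -/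
theorem Setoid.eqvGen_sup {α : Type*} (r s : α → α → Prop) :
    Relation.EqvGen.setoid (r ⊔ s) = Relation.EqvGen.setoid r ⊔ Relation.EqvGen.setoid s :=
  Setoid.gi.gc.l_sup

theorem partImp_inf_generator {U : Type*} (σ τ π : Setoid U) :
    (fun a b => π.r a b ∧ ¬ (σ ⊓ τ).r a b) =
      (fun a b => π.r a b ∧ ¬ σ.r a b) ⊔ (fun a b => π.r a b ∧ ¬ τ.r a b) := by
  ext a b
  exact and_congr_right' (Setoid.inf_iff_and.not.trans not_and_or) |>.trans and_or_left

/-- **Weak De Morgan law for `π`-negation**: `¬^π (σ ∨ τ) = ¬^π σ ∧ ¬^π τ`, stated in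
setoid terms (partition join is setoid `⊓`, partition meet is setoid `⊔`). -/
theorem weak_de_morgan {U : Type*} (σ τ π : Setoid U) :
    partImp (σ ⊓ τ) π = partImp σ π ⊔ partImp τ π := by
  unfold partImp
  rw [partImp_inf_generator σ τ π]
  exact Setoid.eqvGen_sup _ _
end

section
/- Branch-closing lemma (semantic form): let U be a type, π, τ, φ : Setoid U, and a, b, c, d : U. Suppose π.Rel a b, π.Rel c d, and π.Rel a c (so that the two pairs are connected by a chain of π-indistinctions), and suppose ¬ τ.Rel a b and ¬ φ.Rel c d. Then there exist x, y : U with π.Rel x y, ¬ τ.Rel x y, and ¬ φ.Rel x y; i.e., there is a single pair that is simultaneously an indistinction of π and a distinction of both τ and φ. -/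
/-!
If no `π`-indistinction were a distinction of both `τ` and `φ`, then on the `π`-block of `a`
(which contains `a`, `b`, `c`, `d`) every pair would be related by `τ` or by `φ`. But when the
union of two equivalence relations is total, one of them is already total, which contradicts
`¬ τ a b` or `¬ φ c d`.
-/

namespace Setoid

variable {α : Type*}

theorem total_or_total_of_rel_or (r s : Setoid α) (h : ∀ x y, r x y ∨ s x y) :
    (∀ x y, r x y) ∨ (∀ x y, s x y) := by
  by_contra! ⟨⟨a, b, hrab⟩, ⟨c, d, hscd⟩⟩
  rcases h a c with hrac | hsac
  · have hrad : r a d := r.trans hrac ((h c d).resolve_right hscd)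
    have hsbc : s b c := (h b c).resolve_left fun hbc => hrab (r.trans hrac (r.symm hbc))
    have hsbd : s b d := (h b d).resolve_left fun hbd => hrab (r.trans hrad (r.symm hbd))
    exact hscd (s.trans (s.symm hsbc) hsbd)
  · have hsbc : s b c := s.trans (s.symm ((h a b).resolve_left hrab)) hsac
    have hrad : r a d := (h a d).resolve_right fun had => hscd (s.trans (s.symm hsac) had)
    have hrbd : r b d := (h b d).resolve_right fun hbd => hscd (s.trans (s.symm hsbc) hbd)
    exact hrab (r.trans hrad (r.symm hrbd))

end Setoid

/-- **Branch-closing lemma** (semantic form): if `(a, b)` is a `π`-indistinction and a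
`τ`-distinction, `(c, d)` is a `π`-indistinction and a `φ`-distinction, and the two
pairs are connected by a `π`-indistinction `(a, c)`, then some single pair is
simultaneously a `π`-indistinction and a distinction of both `τ` and `φ`. -/
theorem branch_closing {U : Type*} (π τ φ : Setoid U) (a b c d : U)
    (hab : π.r a b) (hcd : π.r c d) (hac : π.r a c)
    (htab : ¬ τ.r a b) (hfcd : ¬ φ.r c d) :
    ∃ x y, π.r x y ∧ ¬ τ.r x y ∧ ¬ φ.r x y := by
  by_contra! h
  let block := {x // π.r a x}
  have hblock : ∀ x y : block, π.r x y := fun x y => π.trans (π.symm x.2) y.2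
  rcases Setoid.total_or_total_of_rel_or (τ.comap Subtype.val) (φ.comap Subtype.val)
      (fun x y => or_iff_not_imp_left.2 (h x y (hblock x y))) with hτ | hφ
  · exact htab (hτ ⟨a, π.refl a⟩ ⟨b, hab⟩)
  · exact hfcd (hφ ⟨c, hac⟩ ⟨d, π.trans hac hcd⟩)
end
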